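/- If A ⇒ B ≡ C₁ ∧ C₂ in Polymorphic System I, then there exist types B₁, B₂ such that C₁ ≡ A ⇒ B₁, C₂ ≡ A ⇒ B₂, and B ≡ B₁ ∧ B₂. -/

import Mathlib

/-- Types of Polymorphic System I: variables, arrows, conjunctions, universal types. -/
inductive Ty : Type
  | var : ℕ → Ty
  | arr : Ty → Ty → Ty
  | conj : Ty → Ty → Ty
  | all : ℕ → Ty → Ty
deriving DecidableEq

/-- Free type variables. -/
def ftv : Ty → Finset ℕ
  | .var X => {X}
  | .arr A B => ftv A ∪ ftv B
  | .conj A B => ftv A ∪ ftv B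
  | .all X A => ftv A \ {X}

/-- Type isomorphism ≡: the smallest congruence generated by the six isomorphisms of PSI. -/
inductive TyEquiv : Ty → Ty → Prop
  | comm (A B) : TyEquiv (.conj A B) (.conj B A)
  | assoc (A B C) : TyEquiv (.conj A (.conj B C)) (.conj (.conj A B) C)
  | distArr (A B C) : TyEquiv (.arr A (.conj B C)) (.conj (.arr A B) (.arr A C))
  | curry (A B C) : TyEquiv (.arr (.conj A B) C) (.arr A (.arr B C))
  | allArr (X A B) : X ∉ ftv A → TyEquiv (.all X (.arr A B)) (.arr A (.all X B))
  | allConj (X A B) : TyEquiv (.all X (.conj A B)) (.conj (.all X A) (.all X B))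
  | refl (A) : TyEquiv A A
  | symm {A B} : TyEquiv A B → TyEquiv B A
  | trans {A B C} : TyEquiv A B → TyEquiv B C → TyEquiv A C
  | congArr {A A' B B'} : TyEquiv A A' → TyEquiv B B' → TyEquiv (.arr A B) (.arr A' B')
  | congConj {A A' B B'} : TyEquiv A A' → TyEquiv B B' → TyEquiv (.conj A B) (.conj A' B')
  | congAll (X) {A B} : TyEquiv A B → TyEquiv (.all X A) (.all X B)

/-- Auxiliary for PF: turn ∀X⃗.(C ⇒ Y) into ∀X⃗.((A ∧ C) ⇒ Y). -/
def pushArr (A : Ty) : Ty → Ty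
  | .all X t => .all X (pushArr A t)
  | .arr C Y => .arr (.conj A C) Y
  | t => t

/-- Multiset of prime factors of a type. -/
def PF : Ty → Multiset Ty
  | .var X => {.var X}
  | .arr A B => (PF B).map (pushArr A)
  | .conj A B => PF A + PF B
  | .all X A => (PF A).map (.all X)

/-- Being of the form ∀X₁...∀Xₙ.(B ⇒ Y) with Y a type variable. -/
inductive IsPrimeForm : Ty → Prop
  | base (B Y) : IsPrimeForm (.arr B (.var Y))
  | step (X) {t} : IsPrimeForm t → IsPrimeForm (.all X t)

/-- Conjunction of a (nonempty) list of types, A₁ ∧ ... ∧ Aₙ. -/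
def conjList : List Ty → Ty
  | [] => .var 0
  | [A] => A
  | A :: l => .conj A (conjList l)

/-- ∀X₁...∀Xₙ.A -/
def allList (l : List ℕ) (A : Ty) : Ty := l.foldr .all A

/-- Substitution of a type for a type variable in a type. -/
def substTy (X : ℕ) (B : Ty) : Ty → Ty
  | .var Y => if Y = X then B else .var Y
  | .arr C D => .arr (substTy X B C) (substTy X B D)
  | .conj C D => .conj (substTy X B C) (substTy X B D)
  | .all Y C => if Y = X then .all Y C else .all Y (substTy X B C)

/-- Terms of PSI (Church style). -/
inductive Tm : Type
  | var : ℕ → Ty → Tm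
  | lam : ℕ → Ty → Tm → Tm
  | app : Tm → Tm → Tm
  | pair : Tm → Tm → Tm
  | proj : Ty → Tm → Tm
  | tlam : ℕ → Tm → Tm
  | tapp : Tm → Ty → Tm

/-- Substitution of a term for a term variable. -/
def substTm (x : ℕ) (s : Tm) : Tm → Tm
  | .var y A => if y = x then s else .var y A
  | .lam y A r => if y = x then .lam y A r else .lam y A (substTm x s r)
  | .app r t => .app (substTm x s r) (substTm x s t)
  | .pair r t => .pair (substTm x s r) (substTm x s t)
  | .proj A r => .proj A (substTm x s r)
  | .tlam X r => .tlam X (substTm x s r)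
  | .tapp r A => .tapp (substTm x s r) A

/-- Substitution of a type for a type variable in a term. -/
def substTyTm (X : ℕ) (B : Ty) : Tm → Tm
  | .var y A => .var y (substTy X B A)
  | .lam y A r => .lam y (substTy X B A) (substTyTm X B r)
  | .app r t => .app (substTyTm X B r) (substTyTm X B t)
  | .pair r t => .pair (substTyTm X B r) (substTyTm X B t)
  | .proj A r => .proj (substTy X B A) (substTyTm X B r)
  | .tlam Y r => if Y = X then .tlam Y r else .tlam Y (substTyTm X B r)
  | .tapp r A => .tapp (substTyTm X B r) (substTy X B A)

abbrev Ctx := List (ℕ × Ty)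

def ftvCtx (Γ : Ctx) : Finset ℕ := Γ.foldr (fun p s => ftv p.2 ∪ s) ∅

def substCtx (X : ℕ) (B : Ty) (Γ : Ctx) : Ctx := Γ.map (fun p => (p.1, substTy X B p.2))

/-- Typing relation of PSI. -/
inductive Typing : Ctx → Tm → Ty → Prop
  | ax {Γ x A} : (x, A) ∈ Γ → Typing Γ (.var x A) A
  | equiv {Γ r A B} : Typing Γ r A → TyEquiv A B → Typing Γ r B
  | arrI {Γ x A r B} : Typing ((x, A) :: Γ) r B → Typing Γ (.lam x A r) (.arr A B)
  | arrE {Γ r s A B} : Typing Γ r (.arr A B) → Typing Γ s A → Typing Γ (.app r s) B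
  | conjI {Γ r s A B} : Typing Γ r A → Typing Γ s B → Typing Γ (.pair r s) (.conj A B)
  | conjE {Γ r A B} : Typing Γ r (.conj A B) → Typing Γ (.proj A r) A
  | allI {Γ r X A} : Typing Γ r A → X ∉ ftvCtx Γ → Typing Γ (.tlam X r) (.all X A)
  | allE {Γ r X A B} : Typing Γ r (.all X A) → Typing Γ (.tapp r B) (substTy X B A)

/-- "r has type A" (context is redundant in Church style). -/
def HasTy (r : Tm) (A : Ty) : Prop := ∃ Γ, Typing Γ r A

/-- One-step structural equivalence ⇄ (symmetric, closed under all term contexts). -/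
inductive StEq : Tm → Tm → Prop
  | comm (r s) : StEq (.pair r s) (.pair s r)
  | assoc (r s t) : StEq (.pair r (.pair s t)) (.pair (.pair r s) t)
  | distLam (x A r s) : StEq (.lam x A (.pair r s)) (.pair (.lam x A r) (.lam x A s))
  | distApp (r s t) : StEq (.app (.pair r s) t) (.pair (.app r t) (.app s t))
  | curry (r s t) : StEq (.app r (.pair s t)) (.app (.app r s) t)
  | pcommII (X x A r) : X ∉ ftv A → StEq (.tlam X (.lam x A r)) (.lam x A (.tlam X r))
  | pcommEI (X x A B r) : X ∉ ftv A → StEq (.tapp (.lam x A r) B) (.lam x A (.tapp r B))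
  | pdistII (X r s) : StEq (.tlam X (.pair r s)) (.pair (.tlam X r) (.tlam X s))
  | pdistEI (r s A) : StEq (.tapp (.pair r s) A) (.pair (.tapp r A) (.tapp s A))
  | pdistIE (X A r) : StEq (.proj (.all X A) (.tlam X r)) (.tlam X (.proj A r))
  | pdistEE (X A B C r) : HasTy r (.all X (.conj B C)) →
      StEq (.tapp (.proj (.all X B) r) A) (.proj (substTy X A B) (.tapp r A))
  | symm {r s} : StEq r s → StEq s r
  | congLam (x A) {r s} : StEq r s → StEq (.lam x A r) (.lam x A s)
  | congAppL (t) {r s} : StEq r s → StEq (.app r t) (.app s t)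
  | congAppR (t) {r s} : StEq r s → StEq (.app t r) (.app t s)
  | congPairL (t) {r s} : StEq r s → StEq (.pair r t) (.pair s t)
  | congPairR (t) {r s} : StEq r s → StEq (.pair t r) (.pair t s)
  | congProj (A) {r s} : StEq r s → StEq (.proj A r) (.proj A s)
  | congTlam (X) {r s} : StEq r s → StEq (.tlam X r) (.tlam X s)
  | congTapp (A) {r s} : StEq r s → StEq (.tapp r A) (.tapp s A)

/-- One-step reduction ↪ (typed β-reductions and typed projection, closed under contexts). -/
inductive Red : Tm → Tm → Prop
  | beta (x A r s) : HasTy s A → Red (.app (.lam x A r) s) (substTm x s r)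
  | tbeta (X A r) : Red (.tapp (.tlam X r) A) (substTyTm X A r)
  | pi (A r s) : HasTy r A → Red (.proj A (.pair r s)) r
  | congLam (x A) {r s} : Red r s → Red (.lam x A r) (.lam x A s)
  | congAppL (t) {r s} : Red r s → Red (.app r t) (.app s t)
  | congAppR (t) {r s} : Red r s → Red (.app t r) (.app t s)
  | congPairL (t) {r s} : Red r s → Red (.pair r t) (.pair s t)
  | congPairR (t) {r s} : Red r s → Red (.pair t r) (.pair t s)
  | congProj (A) {r s} : Red r s → Red (.proj A r) (.proj A s)
  | congTlam (X) {r s} : Red r s → Red (.tlam X r) (.tlam X s)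
  | congTapp (A) {r s} : Red r s → Red (.tapp r A) (.tapp s A)

/-- ⇄*: reflexive-transitive closure of ⇄. -/
def SeqStar : Tm → Tm → Prop := Relation.ReflTransGen StEq

/-- The operational semantics → = ⇄* ∘ ↪ ∘ ⇄*. -/
def Step (r s : Tm) : Prop := ∃ r' s', SeqStar r r' ∧ Red r' s' ∧ SeqStar s' s

/-- Strong normalisation with respect to →. -/
def SN (r : Tm) : Prop := Acc (fun a b => Step b a) r

/-- The measure P on terms. -/
def Pm : Tm → ℕ
  | .var _ _ => 0
  | .lam _ _ r => Pm r
  | .app r _ => Pm r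
  | .pair r s => 1 + Pm r + Pm s
  | .proj _ r => Pm r
  | .tlam _ r => Pm r
  | .tapp r _ => Pm r

/-- The measure M on terms. -/
def Mm : Tm → ℕ
  | .var _ _ => 1
  | .lam _ _ r => 1 + Mm r + Pm r
  | .app r s => Mm r + Mm s + Pm r * Mm s
  | .pair r s => Mm r + Mm s
  | .proj _ r => 1 + Mm r + Pm r
  | .tlam _ r => 1 + Mm r + Pm r
  | .tapp r _ => 1 + Mm r + Pm r


def tySetoid : Setoid Ty := ⟨TyEquiv, ⟨.refl, .symm, .trans⟩⟩

abbrev Qt := Quotient tySetoid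

def mkQ (t : Ty) : Qt := Quotient.mk tySetoid t

lemma mkQ_eq {a b : Ty} (h : TyEquiv a b) : mkQ a = mkQ b := Quotient.sound h
lemma mkQ_exact {a b : Ty} (h : mkQ a = mkQ b) : TyEquiv a b := Quotient.exact h

def allC (X : ℕ) : Qt → Qt := Quotient.map (.all X) (fun _ _ h => .congAll X h)

lemma allC_mkQ (X : ℕ) (p : Ty) : allC X (mkQ p) = mkQ (.all X p) := rfl

/-- prepend a list of premises -/
def addPremL (l : List Ty) (p : Ty) : Ty := l.foldr .arr p

def nfR : Ty → List Ty
  | .var X => [.var X]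
  | .arr A B => (nfR B).map (addPremL (nfR A))
  | .conj A B => nfR A ++ nfR B
  | .all X A => (nfR A).map (.all X)

def nf (T : Ty) : Multiset Qt := ((nfR T).map mkQ : List Qt)

lemma nfR_ne_nil (T : Ty) : nfR T ≠ [] := by
  induction T <;> simp [nfR] <;> simp_all

lemma nf_ne_zero (T : Ty) : nf T ≠ 0 := by
  simp [nf]; exact nfR_ne_nil T

lemma ftv_nfR : ∀ T : Ty, ∀ p ∈ nfR T, ftv p ⊆ ftv T := by
  intro T
  induction T with
  | var X => simp [nfR]
  | conj A B ihA ihB =>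
      intro p hp
      simp [nfR] at hp
      rcases hp with hp | hp
      · exact (ihA p hp).trans (by simp [ftv])
      · exact (ihB p hp).trans (by simp [ftv])
  | all X A ihA =>
      intro p hp
      simp [nfR] at hp
      obtain ⟨q, hq, rfl⟩ := hp
      simp only [ftv]
      exact Finset.sdiff_subset_sdiff (ihA q hq) le_rfl
  | arr A B ihA ihB =>
      intro p hp
      simp [nfR] at hp
      obtain ⟨q, hq, rfl⟩ := hp
      have : ∀ l p', (∀ r ∈ l, ftv r ⊆ ftv A) → ftv p' ⊆ ftv B →
          ftv (addPremL l p') ⊆ ftv (Ty.arr A B) := by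
        intro l
        induction l with
        | nil => intro p' _ h2; exact h2.trans (by simp [ftv])
        | cons r l ih =>
            intro p' h1 h2
            simp only [addPremL, List.foldr] at *
            simp only [ftv]
            apply Finset.union_subset
            · exact (h1 r (by simp)).trans (by simp [ftv])
            · exact ih p' (fun r hr => h1 r (by simp [hr])) h2
      exact this (nfR A) q (ihA) (ihB q hq)

namespace TyEquiv

/-- adjacent premises always commute -/
lemma arrSwap (a b c : Ty) : TyEquiv (.arr a (.arr b c)) (.arr b (.arr a c)) :=
  .trans (.symm (.curry a b c)) (.trans (.congArr (.comm a b) (.refl c)) (.curry b a c))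

lemma conjLeftComm (a b c : Ty) :
    TyEquiv (.conj a (.conj b c)) (.conj b (.conj a c)) :=
  .trans (.assoc a b c) (.trans (.congConj (.comm a b) (.refl c)) (.symm (.assoc b a c)))

end TyEquiv

lemma conjList_cons (a : Ty) (l : List Ty) (h : l ≠ []) :
    conjList (a :: l) = .conj a (conjList l) := by
  cases l with
  | nil => simp at h
  | cons b l => rfl

lemma conjList_append (l₁ l₂ : List Ty) (h₁ : l₁ ≠ []) (h₂ : l₂ ≠ []) :
    TyEquiv (conjList (l₁ ++ l₂)) (.conj (conjList l₁) (conjList l₂)) := by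
  induction l₁ with
  | nil => simp at h₁
  | cons a l₁ ih =>
      cases l₁ with
      | nil =>
          simp only [List.nil_append, List.cons_append]
          rw [conjList_cons a l₂ h₂]
          exact .refl _
      | cons b l₁ =>
          rw [List.cons_append, conjList_cons a ((b :: l₁) ++ l₂) (by simp),
            conjList_cons a (b :: l₁) (by simp)]
          exact .trans (.congConj (.refl a) (ih (by simp))) (.assoc _ _ _)

lemma conjList_forall₂ {l l' : List Ty} (h : List.Forall₂ TyEquiv l l') :
    TyEquiv (conjList l) (conjList l') := by
  induction h with
  | nil => exact .refl _
  | @cons a b l l' hab h ih =>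
      cases h with
      | nil => exact hab
      | cons h1 h2 =>
          rw [conjList_cons a _ (by simp), conjList_cons b _ (by simp)]
          exact .congConj hab ih

/-- arrow distributes over conjList -/
lemma arr_conjList (A : Ty) (l : List Ty) (h : l ≠ []) :
    TyEquiv (.arr A (conjList l)) (conjList (l.map (.arr A))) := by
  induction l with
  | nil => simp at h
  | cons b l ih =>
      cases l with
      | nil => exact .refl _
      | cons c l =>
          rw [conjList_cons b _ (by simp), List.map_cons, conjList_cons (Ty.arr A b) _ (by simp)]
          exact .trans (.distArr A b _) (.congConj (.refl _) (ih (by simp)))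

/-- all distributes over conjList -/
lemma all_conjList (X : ℕ) (l : List Ty) (h : l ≠ []) :
    TyEquiv (.all X (conjList l)) (conjList (l.map (.all X))) := by
  induction l with
  | nil => simp at h
  | cons b l ih =>
      cases l with
      | nil => exact .refl _
      | cons c l =>
          rw [conjList_cons b _ (by simp), List.map_cons, conjList_cons (Ty.all X b) _ (by simp)]
          exact .trans (.allConj X b _) (.congConj (.refl _) (ih (by simp)))

/-- currying a conjList of premises -/
lemma curry_conjList (l : List Ty) (p : Ty) (h : l ≠ []) :
    TyEquiv (.arr (conjList l) p) (addPremL l p) := by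
  induction l with
  | nil => simp at h
  | cons a l ih =>
      cases l with
      | nil => exact .refl _
      | cons c l =>
          rw [conjList_cons a _ (by simp)]
          exact .trans (.curry a _ p) (.congArr (.refl a) (ih (by simp)))

/-- Soundness: every type is equivalent to the conjunction of its prime factors. -/
theorem nf_sound : ∀ T : Ty, TyEquiv T (conjList (nfR T)) := by
  intro T
  induction T with
  | var X => exact .refl _
  | conj A B ihA ihB =>
      exact .trans (.congConj ihA ihB)
        (.symm (conjList_append _ _ (nfR_ne_nil A) (nfR_ne_nil B)))
  | all X A ihA =>
      exact .trans (.congAll X ihA) (all_conjList X _ (nfR_ne_nil A))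
  | arr A B ihA ihB =>
      refine .trans (.congArr (.refl A) ihB) (.trans (arr_conjList A _ (nfR_ne_nil B)) ?_)
      apply conjList_forall₂
      simp only [nfR]
      rw [List.forall₂_map_right_iff, List.forall₂_map_left_iff]
      apply List.forall₂_same.2
      intro p _
      exact .trans (.congArr ihA (.refl p)) (curry_conjList _ p (nfR_ne_nil A))

/-- a premise can be moved to the front -/
lemma addPremL_middle (l₁ l₂ : List Ty) (q p : Ty) :
    TyEquiv (addPremL (l₁ ++ q :: l₂) p) (.arr q (addPremL (l₁ ++ l₂) p)) := by
  induction l₁ with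
  | nil => exact .refl _
  | cons a l₁ ih =>
      exact .trans (.congArr (.refl a) ih) (TyEquiv.arrSwap a q _)

lemma addPremL_perm {l l' : List Ty} (p : Ty) (h : List.Perm (l.map mkQ) (l'.map mkQ)) :
    TyEquiv (addPremL l p) (addPremL l' p) := by
  induction l generalizing l' with
  | nil =>
      have : l' = [] := by simpa using h.symm.eq_nil
      subst this; exact .refl _
  | cons q l ih =>
      have hq : mkQ q ∈ l'.map mkQ := h.mem_iff.1 (by simp)
      obtain ⟨q', hq', hqq⟩ := List.mem_map.1 hq
      obtain ⟨l₁, l₂, rfl⟩ := List.append_of_mem hq'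
      have hperm : List.Perm (l.map mkQ) ((l₁ ++ l₂).map mkQ) := by
        have h2 : List.Perm ((l₁ ++ q' :: l₂).map mkQ) (mkQ q' :: (l₁ ++ l₂).map mkQ) := by
          simp only [List.map_append, List.map_cons]
          exact List.perm_middle
        have := h.trans h2
        rw [hqq] at this
        exact this.cons_inv
      have h1 : TyEquiv (addPremL l p) (addPremL (l₁ ++ l₂) p) := ih hperm
      have h2 : TyEquiv q q' := (mkQ_exact hqq).symm
      exact .trans (.congArr h2 h1) (.symm (addPremL_middle l₁ l₂ q' p))

lemma conjList_middle (l₁ l₂ : List Ty) (q : Ty) (h : l₁ ++ l₂ ≠ []) :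
    TyEquiv (conjList (l₁ ++ q :: l₂)) (.conj q (conjList (l₁ ++ l₂))) := by
  cases l₁ with
  | nil =>
      simp only [List.nil_append] at *
      rw [conjList_cons q l₂ h]
      exact .refl _
  | cons a l₁ =>
      rcases List.eq_nil_or_concat l₂ with rfl | _
      · have e : (a :: l₁) ++ [q] = (a :: l₁) ++ q :: [] := rfl
        refine .trans (conjList_append (a :: l₁) [q] (by simp) (by simp)) ?_
        simp only [List.append_nil]
        exact TyEquiv.comm (conjList (a::l₁)) q
      · have h₂ : l₂ ≠ [] := by rintro rfl; simp_all
        refine .trans (conjList_append (a :: l₁) (q :: l₂) (by simp) (by simp)) ?_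
        rw [conjList_cons q l₂ h₂]
        refine .trans (TyEquiv.conjLeftComm _ q _) ?_
        exact .congConj (.refl q) (.symm (conjList_append _ _ (by simp) h₂))

lemma conjList_perm {l l' : List Ty} (h : List.Perm (l.map mkQ) (l'.map mkQ)) (hne : l ≠ []) :
    TyEquiv (conjList l) (conjList l') := by
  induction l generalizing l' with
  | nil => simp at hne
  | cons q l ih =>
      have hq : mkQ q ∈ l'.map mkQ := h.mem_iff.1 (by simp)
      obtain ⟨q', hq', hqq⟩ := List.mem_map.1 hq
      obtain ⟨l₁, l₂, rfl⟩ := List.append_of_mem hq'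
      have hperm : List.Perm (l.map mkQ) ((l₁ ++ l₂).map mkQ) := by
        have h2 : List.Perm ((l₁ ++ q' :: l₂).map mkQ) (mkQ q' :: (l₁ ++ l₂).map mkQ) := by
          simp only [List.map_append, List.map_cons]
          exact List.perm_middle
        have := h.trans h2
        rw [hqq] at this
        exact this.cons_inv
      have h2 : TyEquiv q q' := (mkQ_exact hqq).symm
      rcases List.eq_nil_or_concat l with rfl | _
      · have : l₁ ++ l₂ = [] := by
          have := hperm.symm.eq_nil
          simpa using this
        rcases List.append_eq_nil_iff.1 this with ⟨rfl, rfl⟩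
        simpa [conjList] using h2
      · have hl : l ≠ [] := by rintro rfl; simp_all
        have hl12 : l₁ ++ l₂ ≠ [] := by
          intro e
          rw [e] at hperm
          exact hl (by simpa using hperm.eq_nil)
        rw [conjList_cons q l hl]
        refine .trans (.congConj h2 (ih hperm hl)) ?_
        exact .symm (conjList_middle l₁ l₂ q' hl12)

/-- Completeness: equal prime factors implies equivalent. -/
theorem nf_complete {S T : Ty} (h : nf S = nf T) : TyEquiv S T := by
  have hp : List.Perm ((nfR S).map mkQ) ((nfR T).map mkQ) := by
    rwa [nf, nf, Multiset.coe_eq_coe] at h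
  exact .trans (nf_sound S) (.trans (conjList_perm hp (nfR_ne_nil S)) (.symm (nf_sound T)))

lemma addPremL_congr_right {l : List Ty} {p p' : Ty} (h : TyEquiv p p') :
    TyEquiv (addPremL l p) (addPremL l p') := by
  induction l with
  | nil => exact h
  | cons q l ih => exact .congArr (.refl q) ih

def addPremQ (A : Ty) : Qt → Qt :=
  Quotient.map (addPremL (nfR A)) (fun _ _ h => addPremL_congr_right h)

lemma addPremQ_mkQ (A p : Ty) : addPremQ A (mkQ p) = mkQ (addPremL (nfR A) p) := rfl

lemma nf_conj (A B : Ty) : nf (.conj A B) = nf A + nf B := by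
  simp [nf, nfR]

lemma nf_all (X : ℕ) (A : Ty) : nf (.all X A) = (nf A).map (allC X) := by
  simp only [nf, nfR, Multiset.map_coe, List.map_map]
  rfl

lemma nf_arr (A B : Ty) : nf (.arr A B) = (nf B).map (addPremQ A) := by
  simp only [nf, nfR, Multiset.map_coe, List.map_map]
  rfl

lemma addPremQ_congr {A A' : Ty} (h : nf A = nf A') : addPremQ A = addPremQ A' := by
  funext x
  induction x using Quotient.ind
  refine Quotient.sound (addPremL_perm _ ?_)
  rwa [nf, nf, Multiset.coe_eq_coe] at h

lemma addPremQ_conj (A B : Ty) : addPremQ (.conj A B) = addPremQ A ∘ addPremQ B := by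
  funext x
  induction x using Quotient.ind
  show mkQ (addPremL (nfR A ++ nfR B) _) = mkQ (addPremL (nfR A) (addPremL (nfR B) _))
  simp [addPremL, List.foldr_append]

lemma all_addPremL {X : ℕ} {l : List Ty} (hl : ∀ q ∈ l, X ∉ ftv q) (p : Ty) :
    TyEquiv (.all X (addPremL l p)) (addPremL l (.all X p)) := by
  induction l with
  | nil => exact .refl _
  | cons q l ih =>
      refine .trans (.allArr X q _ (hl q (by simp))) ?_
      exact .congArr (.refl q) (ih (fun r hr => hl r (by simp [hr])))

lemma allC_addPremQ {X : ℕ} {A : Ty} (hX : X ∉ ftv A) :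
    allC X ∘ addPremQ A = addPremQ A ∘ allC X := by
  funext x
  induction x using Quotient.ind
  refine Quotient.sound (all_addPremL (fun q hq => ?_) _)
  exact fun hX' => hX (ftv_nfR A q hq hX')

/-- Invariance: equivalent types have equal prime factors. -/
theorem nf_invariant {S T : Ty} (h : TyEquiv S T) : nf S = nf T := by
  induction h with
  | comm A B => rw [nf_conj, nf_conj, add_comm]
  | assoc A B C => rw [nf_conj, nf_conj, nf_conj, nf_conj, add_assoc]
  | distArr A B C => rw [nf_arr, nf_conj, nf_conj, nf_arr, nf_arr, Multiset.map_add]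
  | curry A B C =>
      rw [nf_arr, nf_arr, nf_arr, Multiset.map_map, addPremQ_conj]
  | allArr X A B hX =>
      rw [nf_all, nf_arr, nf_arr, nf_all, Multiset.map_map, Multiset.map_map,
        allC_addPremQ hX]
  | allConj X A B => rw [nf_all, nf_conj, nf_conj, nf_all, nf_all, Multiset.map_add]
  | refl A => rfl
  | symm _ ih => exact ih.symm
  | trans _ _ ih₁ ih₂ => exact ih₁.trans ih₂
  | congArr _ _ ih₁ ih₂ => rw [nf_arr, nf_arr, ih₂, addPremQ_congr ih₁]
  | congConj _ _ ih₁ ih₂ => rw [nf_conj, nf_conj, ih₁, ih₂]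
  | congAll X _ ih => rw [nf_all, nf_all, ih]

lemma exists_map_split {α β : Type*} {f : α → β} {s₁ s₂ : Multiset β} :
    ∀ {u : Multiset α}, u.map f = s₁ + s₂ →
    ∃ u₁ u₂, u = u₁ + u₂ ∧ u₁.map f = s₁ ∧ u₂.map f = s₂ := by
  induction s₁ using Multiset.induction with
  | empty => intro u h; exact ⟨0, u, by simp, by simp, by simpa using h⟩
  | @cons b s₁ ih =>
      intro u h
      have hb : b ∈ u.map f := by rw [h]; simp
      obtain ⟨a, ha, rfl⟩ := Multiset.mem_map.1 hb
      obtain ⟨u', rfl⟩ := Multiset.exists_cons_of_mem ha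
      rw [Multiset.map_cons] at h
      have h' : u'.map f = s₁ + s₂ := by
        have := h
        rw [Multiset.cons_add] at this
        exact (Multiset.cons_inj_right _).1 this
      obtain ⟨u₁, u₂, rfl, h₁, h₂⟩ := ih h'
      exact ⟨a ::ₘ u₁, u₂, by rw [Multiset.cons_add], by simp [h₁], h₂⟩

lemma nf_addPremL {p : Ty} (hp : nf p = {mkQ p}) :
    ∀ l : List Ty, nf (addPremL l p) = {mkQ (addPremL l p)} := by
  intro l
  induction l with
  | nil => exact hp
  | cons q l ih =>
      show nf (.arr q (addPremL l p)) = _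
      rw [nf_arr, ih]
      simp only [Multiset.map_singleton, addPremQ_mkQ]
      congr 1
      refine Quotient.sound ?_
      exact .trans (.symm (curry_conjList (nfR q) _ (nfR_ne_nil q)))
        (.congArr (.symm (nf_sound q)) (.refl _))

/-- elements of nfR are prime: their nf is a singleton. -/
lemma nf_prime : ∀ T : Ty, ∀ p ∈ nfR T, nf p = {mkQ p} := by
  intro T
  induction T with
  | var X => intro p hp; simp [nfR] at hp; subst hp; rfl
  | conj A B ihA ihB =>
      intro p hp
      rcases (by simpa [nfR] using hp : p ∈ nfR A ∨ p ∈ nfR B) with h | h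
      · exact ihA p h
      · exact ihB p h
  | all X A ihA =>
      intro p hp
      simp only [nfR, List.mem_map] at hp
      obtain ⟨q, hq, rfl⟩ := hp
      rw [nf_all, ihA q hq]
      simp [allC_mkQ]
  | arr A B ihA ihB =>
      intro p hp
      simp only [nfR, List.mem_map] at hp
      obtain ⟨q, hq, rfl⟩ := hp
      exact nf_addPremL (ihB q hq) (nfR A)

lemma nf_conjList_of_prime : ∀ l : List Ty, l ≠ [] → (∀ p ∈ l, nf p = {mkQ p}) →
    nf (conjList l) = (l.map mkQ : List Qt) := by
  intro l
  induction l with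
  | nil => simp
  | cons p l ih =>
      intro _ hl
      cases l with
      | nil => simpa [conjList] using hl p (by simp)
      | cons q l =>
          rw [conjList_cons p _ (by simp), nf_conj, hl p (by simp),
            ih (by simp) (fun r hr => hl r (by simp [hr]))]
          simp [Multiset.singleton_add]

/-- If A ⇒ B ≡ C₁ ∧ C₂ then C₁ ≡ A ⇒ B₁, C₂ ≡ A ⇒ B₂ and B ≡ B₁ ∧ B₂ for some B₁, B₂. -/
theorem equiv_arr_conj (A B C₁ C₂ : Ty) (h : TyEquiv (.arr A B) (.conj C₁ C₂)) :
    ∃ B₁ B₂, TyEquiv C₁ (.arr A B₁) ∧ TyEquiv C₂ (.arr A B₂) ∧ TyEquiv B (.conj B₁ B₂) := by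
  have hnf : (nf B).map (addPremQ A) = nf C₁ + nf C₂ := by
    rw [← nf_arr, ← nf_conj]; exact nf_invariant h
  obtain ⟨u₁, u₂, hu, hu₁, hu₂⟩ := exists_map_split hnf
  have hB : (↑(nfR B) : Multiset Ty).map mkQ = u₁ + u₂ := by
    rw [Multiset.map_coe, ← hu]; rfl
  obtain ⟨v₁, v₂, hv, hv₁, hv₂⟩ := exists_map_split hB
  -- the candidate types
  set l₁ := v₁.toList with hl₁
  set l₂ := v₂.toList with hl₂
  have hv₁c : (↑l₁ : Multiset Ty) = v₁ := Multiset.coe_toList v₁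
  have hv₂c : (↑l₂ : Multiset Ty) = v₂ := Multiset.coe_toList v₂
  have hmem : ∀ p, p ∈ l₁ ∨ p ∈ l₂ → p ∈ nfR B := by
    intro p hp
    have : p ∈ v₁ + v₂ := by
      rcases hp with hp | hp
      · exact Multiset.mem_add.2 (Or.inl (Multiset.mem_toList.1 hp))
      · exact Multiset.mem_add.2 (Or.inr (Multiset.mem_toList.1 hp))
    rw [← hv] at this
    exact Multiset.mem_coe.1 this
  have hne₁ : l₁ ≠ [] := by
    intro e
    have : v₁ = 0 := by rw [← hv₁c, e]; rfl
    rw [this] at hv₁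
    exact nf_ne_zero C₁ (by rw [← hu₁, ← hv₁]; simp)
  have hne₂ : l₂ ≠ [] := by
    intro e
    have : v₂ = 0 := by rw [← hv₂c, e]; rfl
    rw [this] at hv₂
    exact nf_ne_zero C₂ (by rw [← hu₂, ← hv₂]; simp)
  refine ⟨conjList l₁, conjList l₂, ?_, ?_, ?_⟩
  · apply nf_complete
    rw [nf_arr, nf_conjList_of_prime l₁ hne₁ (fun p hp => nf_prime B p (hmem p (Or.inl hp)))]
    rw [← hu₁, ← hv₁, ← hv₁c, Multiset.map_coe]
  · apply nf_complete
    rw [nf_arr, nf_conjList_of_prime l₂ hne₂ (fun p hp => nf_prime B p (hmem p (Or.inr hp)))]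
    rw [← hu₂, ← hv₂, ← hv₂c, Multiset.map_coe]
  · apply nf_complete
    rw [nf_conj,
      nf_conjList_of_prime l₁ hne₁ (fun p hp => nf_prime B p (hmem p (Or.inl hp))),
      nf_conjList_of_prime l₂ hne₂ (fun p hp => nf_prime B p (hmem p (Or.inr hp))),
      hu, ← hv₁, ← hv₂, ← hv₁c, ← hv₂c, Multiset.map_coe, Multiset.map_coe]
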